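/- arXiv:math/0201095 — 5 statements merged into one kernel-verified Lean document; each statement's English description precedes it below -/
import Mathlib

section
/- Let (q_{ij})_{1≤i,j≤θ} be a matrix of nonzero scalars in a field of characteristic 0 such that each q_{ii} is not a root of unity, and let (a_{ij}) be an integer matrix with a_{ii}=2, a_{ij} ≤ 0 for i≠j, satisfying q_{ij} q_{ji} = q_{ii}^{a_{ij}} for all i,j. Then (a_{ij}) is symmetrizable, i.e., there exist positive rationals d_1,…,d_θ with d_i a_{ij} = d_j a_{ji} for all i,j. -/
/-- Lemma 2.4: a generic braiding of Cartan type has symmetrizable Cartan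
matrix: if `q i j ≠ 0`, no `q i i` is a root of unity, `a` has integer entries
with `a i i = 2`, `a i j ≤ 0` for `i ≠ j`, and `q i j * q j i = q i i ^ a i j`
for all `i, j`, then there exist positive rationals `d i` with
`d i * a i j = d j * a j i` for all `i, j`. -/
theorem stmt1 {k : Type*} [Field k] [CharZero k] {θ : ℕ}
    (q : Fin θ → Fin θ → k) (a : Fin θ → Fin θ → ℤ)
    (hq0 : ∀ i j, q i j ≠ 0)
    (hgen : ∀ i, ∀ N : ℕ, 0 < N → q i i ^ N ≠ 1)
    (hdiag : ∀ i, a i i = 2)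
    (hoff : ∀ i j, i ≠ j → a i j ≤ 0)
    (hcartan : ∀ i j, q i j * q j i = q i i ^ a i j) :
    ∃ d : Fin θ → ℚ, (∀ i, 0 < d i) ∧ ∀ i j, d i * a i j = d j * a j i := by
  classical
  -- each `q i i` has infinite order
  have hinf : ∀ i : Fin θ, ∀ n : ℤ, (q i i) ^ n = 1 → n = 0 := by
    intro i n h
    by_contra hn
    refine hgen i n.natAbs (Int.natAbs_pos.mpr hn) ?_
    rcases Int.natAbs_eq n with he | he
    · rw [← zpow_natCast, ← he, h]
    · rw [← zpow_natCast, ← neg_neg ((n.natAbs : ℤ)), ← he, zpow_neg, h, inv_one]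
  -- uniqueness of exponent ratios
  have factB : ∀ i j : Fin θ, ∀ m n m' n' : ℤ,
      (q i i) ^ m = (q j j) ^ n → (q i i) ^ m' = (q j j) ^ n' →
      m * n' = m' * n := by
    intro i j m n m' n' h1 h2
    have key : (q i i) ^ (m * n' - m' * n) = 1 := by
      rw [zpow_sub₀ (hq0 i i), zpow_mul, h1, zpow_mul, h2, ← zpow_mul, ← zpow_mul,
        mul_comm n n', div_self (zpow_ne_zero _ (hq0 j j))]
    have := hinf i _ key
    omega
  -- commensurability relation
  set rel : Fin θ → Fin θ → Prop :=
    fun i j => ∃ m n : ℤ, m ≠ 0 ∧ n ≠ 0 ∧ (q i i) ^ m = (q j j) ^ n with hrel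
  have hrefl : ∀ i, rel i i := fun i => ⟨1, 1, one_ne_zero, one_ne_zero, rfl⟩
  have hsymm : ∀ i j, rel i j → rel j i := by
    rintro i j ⟨m, n, hm, hn, h⟩
    exact ⟨n, m, hn, hm, h.symm⟩
  have htrans : ∀ i j l, rel i j → rel j l → rel i l := by
    rintro i j l ⟨m, n, hm, hn, h⟩ ⟨p, r, hp, hr, h'⟩
    refine ⟨m * p, n * r, mul_ne_zero hm hp, mul_ne_zero hn hr, ?_⟩
    rw [zpow_mul, h, ← zpow_mul, mul_comm n p, zpow_mul, h', ← zpow_mul, mul_comm r n]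
  -- canonical representative of each commensurability class
  set c : Fin θ → Fin θ := fun i =>
    (Finset.univ.filter (fun j => rel i j)).min' ⟨i, by simp [hrefl i]⟩ with hcdef
  have hc : ∀ i, rel i (c i) := by
    intro i
    have := Finset.min'_mem (Finset.univ.filter (fun j => rel i j)) ⟨i, by simp [hrefl i]⟩
    simpa using this
  have hcc : ∀ i j, rel i j → c i = c j := by
    intro i j hij
    have : (Finset.univ.filter (fun l => rel i l)) = (Finset.univ.filter (fun l => rel j l)) := by
      ext l
      simp only [Finset.mem_filter, Finset.mem_univ, true_and]
      exact ⟨fun h => htrans j i l (hsymm i j hij) h, fun h => htrans i j l hij h⟩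
    simp only [hcdef]
    congr 1
  -- witnesses
  choose m n hm hn hqe using hc
  refine ⟨fun i => |(n i : ℚ) / (m i)|, ?_, ?_⟩
  · intro i
    refine abs_pos.mpr (div_ne_zero ?_ ?_) <;> exact_mod_cast (by first | exact hn i | exact hm i)
  · intro i j
    by_cases hij : i = j
    · subst hij; rfl
    by_cases h0 : a i j = 0
    · have h1 : a j i = 0 := by
        apply hinf j
        rw [← hcartan j i, mul_comm, hcartan i j, h0, zpow_zero]
      rw [h0, h1]
      push_cast
      ring
    · have h1 : a j i ≠ 0 := by
        intro h1
        apply h0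
        apply hinf i
        rw [← hcartan i j, mul_comm, hcartan j i, h1, zpow_zero]
      have hqq : (q i i) ^ (a i j) = (q j j) ^ (a j i) := by
        rw [← hcartan i j, mul_comm, hcartan j i]
      have hrelij : rel i j := ⟨a i j, a j i, h0, h1, hqq⟩
      have hcij : c i = c j := hcc i j hrelij
      -- second witness pair for (i, c i)
      have hqe2 : (q i i) ^ (a i j * m j) = (q (c i) (c i)) ^ (n j * a j i) := by
        rw [zpow_mul, hqq, ← zpow_mul, mul_comm (a j i) (m j), zpow_mul, hcij, hqe j,
          ← zpow_mul]
      have E : m i * (n j * a j i) = (a i j * m j) * n i := factB i (c i) _ _ _ _ (hqe i) hqe2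
      -- sign analysis
      set x : ℤ := n i * m j with hx
      set y : ℤ := n j * m i with hy
      have hE : x * a i j = y * a j i := by rw [hx, hy]; linarith [E]
      have hxne : x ≠ 0 := mul_ne_zero (hn i) (hm j)
      have hyne : y ≠ 0 := mul_ne_zero (hn j) (hm i)
      have haij : a i j < 0 := lt_of_le_of_ne (hoff i j hij) h0
      have haji : a j i < 0 := lt_of_le_of_ne (hoff j i (Ne.symm hij)) h1
      have hv : 0 < (x * a i j) * (y * a j i) := by
        rw [hE]; exact mul_self_pos.mpr (mul_ne_zero hyne haji.ne)
      have hab : 0 < a i j * a j i := mul_pos_of_neg_of_neg haij haji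
      have hxy : 0 < x * y := by nlinarith [hv, hab, mul_self_nonneg (x * y)]
      have habs : |x| * a i j = |y| * a j i := by
        rcases lt_or_gt_of_ne hxne with hxlt | hxgt
        · have hylt : y < 0 := by nlinarith
          rw [abs_of_neg hxlt, abs_of_neg hylt]; linarith
        · have hygt : 0 < y := by nlinarith
          rw [abs_of_pos hxgt, abs_of_pos hygt]; linarith
      -- final computation in ℚ
      have habsq : (|x| : ℚ) * a i j = (|y| : ℚ) * a j i := by exact_mod_cast habs
      have hmi : ((m i : ℚ)) ≠ 0 := Int.cast_ne_zero.mpr (hm i)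
      have hmj : ((m j : ℚ)) ≠ 0 := Int.cast_ne_zero.mpr (hm j)
      have hmi' : |(m i : ℚ)| ≠ 0 := abs_ne_zero.mpr hmi
      have hmj' : |(m j : ℚ)| ≠ 0 := abs_ne_zero.mpr hmj
      show |(n i : ℚ) / (m i)| * (a i j : ℚ) = |(n j : ℚ) / (m j)| * (a j i : ℚ)
      rw [abs_div, abs_div, div_mul_eq_mul_div, div_mul_eq_mul_div,
        div_eq_div_iff hmi' hmj']
      rw [hx, hy] at habsq
      push_cast [abs_mul] at habsq
      linear_combination habsq
end

section
/- Let (a_{ij})_{1≤i,j≤θ} be a generalized Cartan matrix (a_{ii}=2, a_{ij} ≤ 0 integers for i≠j, a_{ij}=0 iff a_{ji}=0) whose associated graph (edge between i≠j iff a_{ij} ≠ 0) is connected, and let (q_{ij}) be a symmetric matrix of positive real numbers with q_{ii} ≠ 1 and q_{ij}q_{ji} = q_{ii}^{a_{ij}} for all i,j. Then there exist a positive real number q ≠ 1 and positive integers d_1,…,d_θ such that q_{ii} = q^{d_i} for all i and q_{ij}q_{ji} = q^{d_i a_{ij}} = q^{d_j a_{ji}} for all i,j. -/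
/-!
Taking logarithms, the Cartan condition gives `a i j * log q i i = a j i * log q j j`.
Along an edge of the Dynkin graph both coefficients are negative, so `log q i i` and
`log q j j` are positive rational multiples of each other; by connectedness this holds for
all pairs. Clearing the (finitely many) denominators writes every `log q i i` as `d i * c`
with `d i` a positive integer and `c ≠ 0`, and `q₀ = exp c` works.
-/

open Relation

def PosCommensurable {R : Type*} [Semiring R] (x y : R) : Prop :=
  ∃ n m : ℕ, 0 < n ∧ 0 < m ∧ (n : R) * x = m * y

namespace PosCommensurable

variable {R : Type*}

instance [Semiring R] : Std.Refl (PosCommensurable (R := R)) :=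
  ⟨fun _ => ⟨1, 1, one_pos, one_pos, rfl⟩⟩

instance [Semiring R] : IsTrans R PosCommensurable where
  trans x y z := by
    rintro ⟨n, m, hn, hm, hxy⟩ ⟨n', m', hn', hm', hyz⟩
    refine ⟨n' * n, m * m', Nat.mul_pos hn' hn, Nat.mul_pos hm hm', ?_⟩
    calc ((n' * n : ℕ) : R) * x = n' * (n * x) := by push_cast; rw [mul_assoc]
      _ = m * (n' * y) := by rw [hxy, ← mul_assoc, ← mul_assoc, Nat.cast_comm]
      _ = ((m * m' : ℕ) : R) * z := by rw [hyz]; push_cast; rw [mul_assoc]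

theorem of_intCast_mul_eq [Ring R] {a b : ℤ} (ha : a < 0) (hb : b < 0) {x y : R}
    (h : (a : R) * x = b * y) : PosCommensurable x y := by
  have natAbs_eq {k : ℤ} (hk : k < 0) : (k.natAbs : R) = -k := by
    rw [Nat.cast_natAbs, abs_of_neg hk, Int.cast_neg]
  refine ⟨a.natAbs, b.natAbs, Int.natAbs_pos.mpr ha.ne, Int.natAbs_pos.mpr hb.ne, ?_⟩
  rw [natAbs_eq ha, natAbs_eq hb, neg_mul, neg_mul, h]

end PosCommensurable

theorem exists_ne_zero_forall_eq_nat_mul_of_posCommensurable {ι K : Type*} [Fintype ι]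
    [Field K] [CharZero K] {x : ι → K} (hx : ∀ i, x i ≠ 0)
    (hcomm : ∀ i j, PosCommensurable (x i) (x j)) :
    ∃ c : K, c ≠ 0 ∧ ∃ d : ι → ℕ, (∀ i, 0 < d i) ∧ ∀ i, x i = d i * c := by
  rcases isEmpty_or_nonempty ι with _ | ⟨⟨i₀⟩⟩
  · exact ⟨1, one_ne_zero, fun _ => 1, isEmptyElim, isEmptyElim⟩
  · choose n m hn hm hnm using fun i => hcomm i i₀
    set N := ∏ i, n i
    have hN : 0 < N := Finset.prod_pos fun i _ => hn i
    have hNK : (N : K) ≠ 0 := Nat.cast_ne_zero.mpr hN.ne'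
    have hdvd (i : ι) : n i ∣ N := Finset.dvd_prod_of_mem _ (Finset.mem_univ i)
    refine ⟨x i₀ / N, div_ne_zero (hx i₀) hNK, fun i => m i * (N / n i),
      fun i => Nat.mul_pos (hm i) (Nat.div_pos (Nat.le_of_dvd hN (hdvd i)) (hn i)), fun i => ?_⟩
    have hni : (n i : K) ≠ 0 := by exact_mod_cast (hn i).ne'
    rw [Nat.cast_mul, Nat.cast_div (hdvd i) hni]
    field_simp
    linear_combination hnm i

theorem stmt2_general {θ : ℕ}
    (a : Fin θ → Fin θ → ℤ)
    (hoff : ∀ i j, i ≠ j → a i j ≤ 0)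
    (hconn : ∀ i j : Fin θ, Relation.ReflTransGen (fun i' j' => a i' j' ≠ 0) i j)
    (q : Fin θ → Fin θ → ℝ)
    (hpos : ∀ i j, 0 < q i j)
    (hne1 : ∀ i, q i i ≠ 1)
    (hcartan : ∀ i j, q i j * q j i = q i i ^ a i j) :
    ∃ q₀ : ℝ, 0 < q₀ ∧ q₀ ≠ 1 ∧ ∃ d : Fin θ → ℕ,
      (∀ i, 0 < d i) ∧ (∀ i, q i i = q₀ ^ (d i)) ∧
      ∀ i j, q i j * q j i = q₀ ^ ((d i : ℤ) * a i j) ∧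
        q i j * q j i = q₀ ^ ((d j : ℤ) * a j i) := by
  set L : Fin θ → ℝ := fun i => Real.log (q i i)
  have hL (i : Fin θ) : L i ≠ 0 := Real.log_ne_zero_of_pos_of_ne_one (hpos i i) (hne1 i)
  have hlog (i j : Fin θ) : (a i j : ℝ) * L i = a j i * L j := by
    have h := congrArg Real.log ((hcartan i j).symm.trans (mul_comm _ _ |>.trans (hcartan j i)))
    simpa only [Real.log_zpow] using h
  have hcomm_of_edge (i j : Fin θ) (hij : a i j ≠ 0) : PosCommensurable (L i) (L j) := by
    rcases eq_or_ne i j with rfl | hne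
    · exact refl _
    have hji : a j i ≠ 0 := by
      intro h
      have := hlog i j
      rw [h, Int.cast_zero, zero_mul] at this
      exact mul_ne_zero (Int.cast_ne_zero.mpr hij) (hL i) this
    exact .of_intCast_mul_eq ((hoff i j hne).lt_of_ne hij) ((hoff j i hne.symm).lt_of_ne hji)
      (hlog i j)
  obtain ⟨c, hc, d, hd, hLd⟩ := exists_ne_zero_forall_eq_nat_mul_of_posCommensurable hL
    fun i j => reflTransGen_le_of_le le_rfl _ _ ((hconn i j).lift L hcomm_of_edge)
  have hqd (i : Fin θ) : q i i = Real.exp c ^ d i := by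
    rw [← Real.exp_nat_mul, ← hLd, Real.exp_log (hpos i i)]
  refine ⟨Real.exp c, Real.exp_pos c, Real.exp_eq_one_iff c |>.not.mpr hc, d, hd, hqd,
    fun i j => ⟨?_, ?_⟩⟩
  · rw [hcartan, hqd, ← zpow_natCast, ← zpow_mul]
  · rw [mul_comm, hcartan, hqd, ← zpow_natCast, ← zpow_mul]

/-- Lemma 2.5 (Rosso): an indecomposable positive symmetric braiding of Cartan
type is (twist-equivalent to one) of DJ-type: there exist a positive real
`q₀ ≠ 1` and positive integers `d i` such that `q i i = q₀ ^ d i` and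
`q i j * q j i = q₀ ^ (d i * a i j) = q₀ ^ (d j * a j i)` for all `i, j`. -/
theorem stmt2 {θ : ℕ}
    (a : Fin θ → Fin θ → ℤ)
    (hdiag : ∀ i, a i i = 2)
    (hoff : ∀ i j, i ≠ j → a i j ≤ 0)
    (hzero : ∀ i j, a i j = 0 ↔ a j i = 0)
    (hconn : ∀ i j : Fin θ, Relation.ReflTransGen (fun i' j' => a i' j' ≠ 0) i j)
    (q : Fin θ → Fin θ → ℝ)
    (hpos : ∀ i j, 0 < q i j)
    (hsymm : ∀ i j, q i j = q j i)
    (hne1 : ∀ i, q i i ≠ 1)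
    (hcartan : ∀ i j, q i j * q j i = q i i ^ a i j) :
    ∃ q₀ : ℝ, 0 < q₀ ∧ q₀ ≠ 1 ∧ ∃ d : Fin θ → ℕ,
      (∀ i, 0 < d i) ∧ (∀ i, q i i = q₀ ^ (d i)) ∧
      ∀ i j, q i j * q j i = q₀ ^ ((d i : ℤ) * a i j) ∧
        q i j * q j i = q₀ ^ ((d j : ℤ) * a j i) :=
  stmt2_general a hoff hconn q hpos hne1 hcartan
end

section
/- In the setting of a generic datum of finite Cartan type: if i is linkable to k and j is linkable to ℓ, then a_{ij} = a_{kℓ} and a_{ji} = a_{ℓk}. -/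
theorem aux_zpow_one {G : Type*} [Group G] (x : G)
    (hx : ∀ N : ℕ, 0 < N → x ^ N ≠ 1) {n : ℤ} (h : x ^ n = 1) : n = 0 := by
  rcases lt_trichotomy n 0 with hn | hn | hn
  · exfalso
    apply hx (-n).toNat (by omega)
    have hc : ((-n).toNat : ℤ) = -n := Int.toNat_of_nonneg (by omega)
    rw [← zpow_natCast, hc, zpow_neg, h, inv_one]
  · exact hn
  · exfalso
    apply hx n.toNat (by omega)
    have hc : ((n).toNat : ℤ) = n := Int.toNat_of_nonneg (by omega)
    rw [← zpow_natCast, hc, h]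

theorem aux_zpow_inj {G : Type*} [Group G] (x : G)
    (hx : ∀ N : ℕ, 0 < N → x ^ N ≠ 1) {m n : ℤ} (h : x ^ m = x ^ n) : m = n := by
  have h1 : x ^ (m - n) = 1 := by rw [zpow_sub, h]; group
  have := aux_zpow_one x hx h1
  omega

theorem aux_char_inv {K : Type*} [Field K] {Γ : Type*} [CommGroup Γ]
    {φ ψ : Γ →* Kˣ} (h : φ * ψ = 1) : ∀ x, ψ x = (φ x)⁻¹ := by
  intro x
  have hx := DFunLike.congr_fun h x
  simp only [MonoidHom.mul_apply, MonoidHom.one_apply] at hx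
  exact (inv_eq_of_mul_eq_one_right hx).symm

theorem aux_key {K : Type*} [Field K] {Γ : Type*} [CommGroup Γ] {θ : ℕ}
    (g : Fin θ → Γ) (χ : Fin θ → Γ →* Kˣ)
    (q : Fin θ → Fin θ → Kˣ) (hqdef : ∀ i j, q i j = χ j (g i))
    (a : Fin θ → Fin θ → ℤ)
    (hoff : ∀ i j, i ≠ j → a i j ≤ 0)
    (hcartan : ∀ i j, q i j * q j i = q i i ^ a i j)
    (hgen : ∀ i, ∀ N : ℕ, 0 < N → q i i ^ N ≠ 1)
    (d : Fin θ → ℕ) (hd : ∀ i, 0 < d i)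
    (hsym : ∀ i j, (d i : ℤ) * a i j = (d j : ℤ) * a j i)
    (i j kk ℓ : Fin θ)
    (h1 : q i kk * q kk i = 1) (h3 : χ i * χ kk = 1)
    (h4 : q j ℓ * q ℓ j = 1) (h6 : χ j * χ ℓ = 1)
    (hij : i ≠ j) (hil : i ≠ ℓ) (hkj : kk ≠ j) (hkl : kk ≠ ℓ)
    (h0 : a i j ≠ 0) :
    a i j = a kk ℓ ∧ a j i = a ℓ kk := by
  have hzero : ∀ (m : Fin θ) (n : ℤ), q m m ^ n = 1 → n = 0 :=
    fun m n h => aux_zpow_one _ (hgen m) h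
  have hinj : ∀ (m : Fin θ) (s t : ℤ), q m m ^ s = q m m ^ t → s = t :=
    fun m s t h => aux_zpow_inj _ (hgen m) h
  have hk := aux_char_inv h3
  have hl := aux_char_inv h6
  -- basic q facts
  have e_ik : q i kk = (q i i)⁻¹ := by rw [hqdef i kk, hk, ← hqdef i i]
  have hq1 : q kk i = q i i := by
    have := h1; rw [e_ik, inv_mul_eq_one] at this; exact this.symm
  have F1 : q kk kk = (q i i)⁻¹ := by rw [hqdef kk kk, hk, ← hqdef kk i, hq1]
  have e_jl : q j ℓ = (q j j)⁻¹ := by rw [hqdef j ℓ, hl, ← hqdef j j]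
  have hq2 : q ℓ j = q j j := by
    have := h4; rw [e_jl, inv_mul_eq_one] at this; exact this.symm
  have F2 : q ℓ ℓ = (q j j)⁻¹ := by rw [hqdef ℓ ℓ, hl, ← hqdef ℓ j, hq2]
  -- translation facts
  have e_jk : q j kk = (q j i)⁻¹ := by rw [hqdef j kk, hk, ← hqdef j i]
  have e_il : q i ℓ = (q i j)⁻¹ := by rw [hqdef i ℓ, hl, ← hqdef i j]
  have e_kl : q kk ℓ = (q kk j)⁻¹ := by rw [hqdef kk ℓ, hl, ← hqdef kk j]
  have e_lk : q ℓ kk = (q ℓ i)⁻¹ := by rw [hqdef ℓ kk, hk, ← hqdef ℓ i]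
  -- Cartan equations
  have c1 := hcartan i j
  have c1' : q i j * q j i = q j j ^ a j i := by rw [mul_comm]; exact hcartan j i
  have c2 : q kk j * q j kk = q i i ^ (-a kk j) := by
    have h := hcartan kk j; rw [F1] at h; rw [h, inv_zpow, ← zpow_neg]
  have c2' : q kk j * q j kk = q j j ^ a j kk := by rw [mul_comm]; exact hcartan j kk
  have c3 := hcartan i ℓ
  have c3' : q i ℓ * q ℓ i = q j j ^ (-a ℓ i) := by
    have h := hcartan ℓ i; rw [F2] at h; rw [mul_comm, h, inv_zpow, ← zpow_neg]
  have c4 : q kk ℓ * q ℓ kk = q i i ^ (-a kk ℓ) := by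
    have h := hcartan kk ℓ; rw [F1] at h; rw [h, inv_zpow, ← zpow_neg]
  have c4' : q kk ℓ * q ℓ kk = q j j ^ (-a ℓ kk) := by
    have h := hcartan ℓ kk; rw [F2] at h; rw [mul_comm, h, inv_zpow, ← zpow_neg]
  -- product identity
  have P : (q kk ℓ * q ℓ kk) * ((q kk j * q j kk) * ((q i j * q j i) * (q i ℓ * q ℓ i))) = 1 := by
    rw [e_kl, e_lk, e_jk, e_il]; simp [mul_comm, mul_left_comm, mul_assoc]
  have hA : -a kk ℓ + (-a kk j + (a i j + a i ℓ)) = 0 := by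
    apply hzero i _
    rw [zpow_add, zpow_add, zpow_add, ← c4, ← c2, ← c1, ← c3]; exact P
  have hB : -a ℓ kk + (a j kk + (a j i + -a ℓ i)) = 0 := by
    apply hzero j _
    rw [zpow_add, zpow_add, zpow_add, ← c4', ← c2', ← c1', ← c3']; exact P
  -- cross relations
  have E2 : -a kk j * a j i = a i j * a j kk := by
    apply hinj i _ _
    calc q i i ^ (-a kk j * a j i)
        = (q i i ^ (-a kk j)) ^ a j i := by rw [← zpow_mul]
      _ = (q kk j * q j kk) ^ a j i := by rw [c2]
      _ = (q j j ^ a j kk) ^ a j i := by rw [c2']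
      _ = (q j j ^ a j i) ^ a j kk := by rw [← zpow_mul, ← zpow_mul, mul_comm]
      _ = (q i j * q j i) ^ a j kk := by rw [c1']
      _ = (q i i ^ a i j) ^ a j kk := by rw [c1]
      _ = q i i ^ (a i j * a j kk) := by rw [← zpow_mul]
  have E3 : a i ℓ * a j i = -a ℓ i * a i j := by
    apply hinj i _ _
    calc q i i ^ (a i ℓ * a j i)
        = (q i i ^ a i ℓ) ^ a j i := by rw [← zpow_mul]
      _ = (q i ℓ * q ℓ i) ^ a j i := by rw [c3]
      _ = (q j j ^ (-a ℓ i)) ^ a j i := by rw [c3']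
      _ = (q j j ^ a j i) ^ (-a ℓ i) := by rw [← zpow_mul, ← zpow_mul, mul_comm]
      _ = (q i j * q j i) ^ (-a ℓ i) := by rw [c1']
      _ = (q i i ^ a i j) ^ (-a ℓ i) := by rw [c1]
      _ = q i i ^ (-a ℓ i * a i j) := by rw [← zpow_mul, mul_comm]
  -- sign analysis
  have hije : a i j < 0 := lt_of_le_of_ne (hoff i j hij) h0
  have hjie : a j i < 0 := by
    have hs := hsym i j
    have di : (0:ℤ) < (d i : ℤ) := by exact_mod_cast hd i
    have dj : (0:ℤ) < (d j : ℤ) := by exact_mod_cast hd j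
    nlinarith
  have s2 : a kk j ≤ 0 := hoff kk j hkj
  have s3 : a j kk ≤ 0 := hoff j kk (Ne.symm hkj)
  have s4 : a i ℓ ≤ 0 := hoff i ℓ hil
  have s5 : a ℓ i ≤ 0 := hoff ℓ i (Ne.symm hil)
  have p1 : a kk j * a j i = 0 ∧ a i j * a j kk = 0 := by
    constructor <;>
      nlinarith [mul_nonneg (neg_nonneg.2 s2) (neg_nonneg.2 hjie.le),
        mul_nonneg (neg_nonneg.2 hije.le) (neg_nonneg.2 s3)]
  have p2 : a i ℓ * a j i = 0 ∧ a ℓ i * a i j = 0 := by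
    constructor <;>
      nlinarith [mul_nonneg (neg_nonneg.2 s4) (neg_nonneg.2 hjie.le),
        mul_nonneg (neg_nonneg.2 s5) (neg_nonneg.2 hije.le)]
  have z1 : a kk j = 0 := by
    rcases mul_eq_zero.mp p1.1 with h | h
    · exact h
    · exact absurd h hjie.ne
  have z2 : a j kk = 0 := by
    rcases mul_eq_zero.mp p1.2 with h | h
    · exact absurd h h0
    · exact h
  have z3 : a i ℓ = 0 := by
    rcases mul_eq_zero.mp p2.1 with h | h
    · exact h
    · exact absurd h hjie.ne
  have z4 : a ℓ i = 0 := by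
    rcases mul_eq_zero.mp p2.2 with h | h
    · exact h
    · exact absurd h h0
  exact ⟨by omega, by omega⟩

/-- Relation (4.5) of the paper: in a generic datum of finite Cartan type
(with symmetrizable Cartan matrix), if `i` and `kk` are linkable and `j` and
`ℓ` are linkable, then `a i j = a kk ℓ` and `a j i = a ℓ kk`. -/
theorem stmt5 {k : Type*} [Field k] [CharZero k] {Γ : Type*} [CommGroup Γ] {θ : ℕ}
    (g : Fin θ → Γ) (χ : Fin θ → Γ →* kˣ)
    (q : Fin θ → Fin θ → kˣ) (hqdef : ∀ i j, q i j = χ j (g i))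
    (a : Fin θ → Fin θ → ℤ)
    (hdiag : ∀ i, a i i = 2)
    (hoff : ∀ i j, i ≠ j → a i j ≤ 0)
    (hcartan : ∀ i j, q i j * q j i = q i i ^ a i j)
    (hgen : ∀ i, ∀ N : ℕ, 0 < N → q i i ^ N ≠ 1)
    (d : Fin θ → ℕ) (hd : ∀ i, 0 < d i)
    (hsym : ∀ i j, (d i : ℤ) * a i j = (d j : ℤ) * a j i)
    (i j kk ℓ : Fin θ)
    -- `i` is linkable to `kk`:
    (h1 : q i kk * q kk i = 1) (h2 : g i * g kk ≠ 1) (h3 : χ i * χ kk = 1)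
    -- `j` is linkable to `ℓ`:
    (h4 : q j ℓ * q ℓ j = 1) (h5 : g j * g ℓ ≠ 1) (h6 : χ j * χ ℓ = 1) :
    a i j = a kk ℓ ∧ a j i = a ℓ kk := by
  by_cases hij : i = j
  · -- case i = j : show a kk ℓ = a ℓ kk = 2
    subst hij
    have hk := aux_char_inv h3
    have hl := aux_char_inv h6
    have e_ik : q i kk = (q i i)⁻¹ := by rw [hqdef i kk, hk, ← hqdef i i]
    have hq1 : q kk i = q i i := by
      have := h1; rw [e_ik, inv_mul_eq_one] at this; exact this.symm
    have F1 : q kk kk = (q i i)⁻¹ := by rw [hqdef kk kk, hk, ← hqdef kk i, hq1]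
    have e_il : q i ℓ = (q i i)⁻¹ := by rw [hqdef i ℓ, hl, ← hqdef i i]
    have hq2 : q ℓ i = q i i := by
      have := h4; rw [e_il, inv_mul_eq_one] at this; exact this.symm
    have F2 : q ℓ ℓ = (q i i)⁻¹ := by rw [hqdef ℓ ℓ, hl, ← hqdef ℓ i, hq2]
    have e_kl : q kk ℓ = (q i i)⁻¹ := by rw [hqdef kk ℓ, hl, ← hqdef kk i, hq1]
    have e_lk : q ℓ kk = (q i i)⁻¹ := by rw [hqdef ℓ kk, hk, ← hqdef ℓ i, hq2]
    have c4 : q i i ^ (-a kk ℓ) = q i i ^ (-2 : ℤ) := by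
      have h := hcartan kk ℓ; rw [F1] at h
      calc q i i ^ (-a kk ℓ) = (q i i)⁻¹ ^ a kk ℓ := by rw [inv_zpow, ← zpow_neg]
        _ = q kk ℓ * q ℓ kk := h.symm
        _ = (q i i)⁻¹ * (q i i)⁻¹ := by rw [e_kl, e_lk]
        _ = q i i ^ (-2 : ℤ) := by group
    have c4' : q i i ^ (-a ℓ kk) = q i i ^ (-2 : ℤ) := by
      have h := hcartan ℓ kk; rw [F2] at h
      calc q i i ^ (-a ℓ kk) = (q i i)⁻¹ ^ a ℓ kk := by rw [inv_zpow, ← zpow_neg]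
        _ = q ℓ kk * q kk ℓ := h.symm
        _ = (q i i)⁻¹ * (q i i)⁻¹ := by rw [e_kl, e_lk, mul_comm]
        _ = q i i ^ (-2 : ℤ) := by group
    have r1 := aux_zpow_inj _ (hgen i) c4
    have r2 := aux_zpow_inj _ (hgen i) c4'
    have hA := hdiag i
    exact ⟨by omega, by omega⟩
  by_cases hil : i = ℓ
  · -- case i = ℓ : all four Cartan entries vanish
    subst hil
    have haik : a i kk = 0 :=
      aux_zpow_one _ (hgen i) (by rw [← hcartan i kk]; exact h1)
    have haij : a i j = 0 :=
      aux_zpow_one _ (hgen i) (by rw [← hcartan i j, mul_comm]; exact h4)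
    have dk : (0:ℤ) < (d kk : ℤ) := by exact_mod_cast hd kk
    have dj : (0:ℤ) < (d j : ℤ) := by exact_mod_cast hd j
    have hkki : a kk i = 0 := by
      have hs := hsym i kk; rw [haik, mul_zero] at hs
      rcases mul_eq_zero.mp hs.symm with h | h
      · exact absurd h dk.ne'
      · exact h
    have haji : a j i = 0 := by
      have hs := hsym i j; rw [haij, mul_zero] at hs
      rcases mul_eq_zero.mp hs.symm with h | h
      · exact absurd h dj.ne'
      · exact h
    exact ⟨by rw [haij, hkki], by rw [haji, haik]⟩
  by_cases hkj : kk = j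
  · -- case kk = j : contradiction, since then a i ℓ = 2 but i ≠ ℓ
    exfalso
    subst hkj
    have hk := aux_char_inv h3
    have hl := aux_char_inv h6
    have heq : ∀ x, χ ℓ x = χ i x := fun x => by rw [hl, hk, inv_inv]
    have e_il : q i ℓ = q i i := by rw [hqdef i ℓ, heq, ← hqdef i i]
    have e_ij : q i kk = (q i i)⁻¹ := by rw [hqdef i kk, hk, ← hqdef i i]
    have hq1 : q kk i = q i i := by
      have := h1; rw [e_ij, inv_mul_eq_one] at this; exact this.symm
    have F1 : q kk kk = (q i i)⁻¹ := by rw [hqdef kk kk, hk, ← hqdef kk i, hq1]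
    have e_jl : q kk ℓ = (q kk kk)⁻¹ := by rw [hqdef kk ℓ, hl, ← hqdef kk kk]
    have hq2 : q ℓ kk = q kk kk := by
      have := h4; rw [e_jl, inv_mul_eq_one] at this; exact this.symm
    have F2 : q ℓ ℓ = (q kk kk)⁻¹ := by rw [hqdef ℓ ℓ, hl, ← hqdef ℓ kk, hq2]
    have e_li : q ℓ i = q i i := by
      rw [hqdef ℓ i, ← heq, ← hqdef ℓ ℓ, F2, F1, inv_inv]
    have c3 : q i i ^ a i ℓ = q i i ^ (2:ℤ) := by
      rw [← hcartan i ℓ, e_il, e_li, zpow_two]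
    have h2' := aux_zpow_inj _ (hgen i) c3
    have := hoff i ℓ hil
    omega
  by_cases hkl : kk = ℓ
  · -- case kk = ℓ : contradiction, since then a i j = 2 but i ≠ j
    exfalso
    subst hkl
    have hk := aux_char_inv h3
    have hl := aux_char_inv h6
    have heq : ∀ x, χ i x = χ j x := fun x => inv_injective ((hk x).symm.trans (hl x))
    have e_ij : q i j = q i i := by rw [hqdef i j, ← heq, ← hqdef i i]
    have e_ji : q j i = q j j := by rw [hqdef j i, heq, ← hqdef j j]
    have e_il : q i kk = (q i i)⁻¹ := by rw [hqdef i kk, hk, ← hqdef i i]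
    have hq1 : q kk i = q i i := by
      have := h1; rw [e_il, inv_mul_eq_one] at this; exact this.symm
    have F1 : q kk kk = (q i i)⁻¹ := by rw [hqdef kk kk, hk, ← hqdef kk i, hq1]
    have e_jl : q j kk = (q j j)⁻¹ := by rw [hqdef j kk, hl, ← hqdef j j]
    have hq2 : q kk j = q j j := by
      have := h4; rw [e_jl, inv_mul_eq_one] at this; exact this.symm
    have F2 : q kk kk = (q j j)⁻¹ := by rw [hqdef kk kk, hl, ← hqdef kk j, hq2]
    have hij2 : q i i = q j j := inv_injective (F1.symm.trans F2)
    have c1 : q i i ^ a i j = q i i ^ (2:ℤ) := by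
      rw [← hcartan i j, e_ij, e_ji, ← hij2, zpow_two]
    have h2' := aux_zpow_inj _ (hgen i) c1
    have := hoff i j hij
    omega
  -- generic case: all relevant pairs distinct
  rcases eq_or_ne (a i j) 0 with h0 | h0
  · rcases eq_or_ne (a kk ℓ) 0 with h0' | h0'
    · have dj : (0:ℤ) < (d j : ℤ) := by exact_mod_cast hd j
      have dl : (0:ℤ) < (d ℓ : ℤ) := by exact_mod_cast hd ℓ
      have haji : a j i = 0 := by
        have hs := hsym i j; rw [h0, mul_zero] at hs
        rcases mul_eq_zero.mp hs.symm with h | h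
        · exact absurd h dj.ne'
        · exact h
      have halk : a ℓ kk = 0 := by
        have hs := hsym kk ℓ; rw [h0', mul_zero] at hs
        rcases mul_eq_zero.mp hs.symm with h | h
        · exact absurd h dl.ne'
        · exact h
      exact ⟨by rw [h0, h0'], by rw [haji, halk]⟩
    · have h1' : q kk i * q i kk = 1 := by rw [mul_comm]; exact h1
      have h3' : χ kk * χ i = 1 := (mul_comm (χ kk) (χ i)).trans h3
      have h4' : q ℓ j * q j ℓ = 1 := by rw [mul_comm]; exact h4
      have h6' : χ ℓ * χ j = 1 := (mul_comm (χ ℓ) (χ j)).trans h6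
      have key := aux_key g χ q hqdef a hoff hcartan hgen d hd hsym kk ℓ i j
        h1' h3' h4' h6' hkl hkj hil hij h0'
      exact ⟨key.1.symm, key.2.symm⟩
  · exact aux_key g χ q hqdef a hoff hcartan hgen d hd hsym i j kk ℓ
      h1 h3 h4 h6 hij hil hkj hkl h0
end

section
/- In the setting of a generic datum of finite Cartan type: a vertex i cannot be linkable to two different vertices j and h; that is, if i is linkable to j and i is linkable to h, then j = h. -/
/-- Relation (4.6) of the paper: in a generic datum of Cartan type, a vertex
`i` cannot be linkable to two different vertices `j` and `h`. -/
theorem stmt6 {k : Type*} [Field k] [CharZero k] {Γ : Type*} [CommGroup Γ] {θ : ℕ}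
    (g : Fin θ → Γ) (χ : Fin θ → Γ →* kˣ)
    (q : Fin θ → Fin θ → kˣ) (hqdef : ∀ i j, q i j = χ j (g i))
    (a : Fin θ → Fin θ → ℤ)
    (hdiag : ∀ i, a i i = 2)
    (hoff : ∀ i j, i ≠ j → a i j ≤ 0)
    (hcartan : ∀ i j, q i j * q j i = q i i ^ a i j)
    (hgen : ∀ i, ∀ N : ℕ, 0 < N → q i i ^ N ≠ 1)
    (i j h : Fin θ)
    -- `i` is linkable to `j`:
    (h1 : q i j * q j i = 1) (h2 : g i * g j ≠ 1) (h3 : χ i * χ j = 1)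
    -- `i` is linkable to `h`:
    (h4 : q i h * q h i = 1) (h5 : g i * g h ≠ 1) (h6 : χ i * χ h = 1) :
    j = h := by
  by_contra hne
  have hχj : ∀ x, χ j x = (χ i x)⁻¹ := by
    intro x
    have hx := DFunLike.congr_fun h3 x
    simp only [MonoidHom.mul_apply, MonoidHom.one_apply] at hx
    exact eq_inv_of_mul_eq_one_right hx
  have hχh : ∀ x, χ h x = (χ i x)⁻¹ := by
    intro x
    have hx := DFunLike.congr_fun h6 x
    simp only [MonoidHom.mul_apply, MonoidHom.one_apply] at hx
    exact eq_inv_of_mul_eq_one_right hx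
  -- χ i (g j) = q i i
  have hgj : χ i (g j) = q i i := by
    have e1 : q i j = (q i i)⁻¹ := by rw [hqdef, hqdef, hχj]
    have hh := h1
    rw [e1, hqdef j i] at hh
    exact (inv_mul_eq_one.mp hh).symm
  have hgh : χ i (g h) = q i i := by
    have e1 : q i h = (q i i)⁻¹ := by rw [hqdef, hqdef, hχh]
    have hh := h4
    rw [e1, hqdef h i] at hh
    exact (inv_mul_eq_one.mp hh).symm
  have hc := hcartan j h
  have e1 : q j h = (q i i)⁻¹ := by rw [hqdef, hχh, hgj]
  have e2 : q h j = (q i i)⁻¹ := by rw [hqdef, hχj, hgh]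
  have e3 : q j j = (q i i)⁻¹ := by rw [hqdef, hχj, hgj]
  rw [e1, e2, e3, inv_zpow] at hc
  -- hc : (q i i)⁻¹ * (q i i)⁻¹ = (q i i ^ a j h)⁻¹
  have hz : (q i i) ^ ((2 : ℤ) - a j h) = 1 := by
    have h2' : q i i ^ (a j h) = q i i ^ (2 : ℤ) := by
      apply inv_injective
      rw [← hc, zpow_two, mul_inv]
    rw [zpow_sub, h2', mul_inv_cancel]
  have hle : a j h ≤ 0 := hoff j h hne
  have hpos : 0 < ((2 : ℤ) - a j h).toNat := by omega
  apply hgen i _ hpos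
  rw [← zpow_natCast, Int.toNat_of_nonneg (by omega)]
  exact hz
end

section
/- Let C be a strictly coradically ℕ^T-graded coalgebra over a field. Then C is coradically graded: for every n ∈ ℕ, the n-th term of the coradical filtration of C equals the direct sum of the homogeneous components C(i) over all multi-indices i ∈ ℕ^T with |i| ≤ n. -/
open TensorProduct

section Defs

variable (k C : Type*) [CommRing k] [AddCommGroup C] [Module k C] [Coalgebra k C]

/-- The submodule `X ⊗ Y` of `C ⊗ C`. -/
noncomputable def tensorSub (X Y : Submodule k C) : Submodule k (C ⊗[k] C) :=
  LinearMap.range (TensorProduct.map X.subtype Y.subtype)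

/-- The wedge `X ∧ Y = Δ⁻¹(X ⊗ C + C ⊗ Y)` of two submodules of a coalgebra. -/
noncomputable def wedge (X Y : Submodule k C) : Submodule k C :=
  Submodule.comap (Coalgebra.comul (R := k))
    (tensorSub k C X ⊤ ⊔ tensorSub k C ⊤ Y)

/-- A submodule `D` of `C` is a subcoalgebra if `Δ(D) ⊆ D ⊗ D`. -/
def IsSubcoalgebra (D : Submodule k C) : Prop :=
  ∀ x ∈ D, Coalgebra.comul (R := k) x ∈ tensorSub k C D D

/-- The coradical of `C`: the sum of all simple subcoalgebras of `C`. -/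
noncomputable def coradical : Submodule k C :=
  sSup {D | IsSubcoalgebra k C D ∧ D ≠ ⊥ ∧
    ∀ E, IsSubcoalgebra k C E → E ≤ D → E = ⊥ ∨ E = D}

/-- The coradical filtration `C₀ ⊆ C₁ ⊆ ⋯` of `C`:
`C₀` is the coradical and `Cₙ = C₀ ∧ C_{n-1}`. -/
noncomputable def coradFil : ℕ → Submodule k C
  | 0 => coradical k C
  | n + 1 => wedge k C (coradical k C) (coradFil n)

variable {T : ℕ}

/-- `𝒞` is an `ℕ^T`-grading of the coalgebra `C`: the `𝒞 i` form an internal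
direct sum decomposition of `C`, and `Δ 𝒞(i) ⊆ ⊕_{j ≤ i} 𝒞(j) ⊗ 𝒞(i - j)`. -/
def IsGradedCoalgebra (𝒞 : (Fin T → ℕ) → Submodule k C) : Prop :=
  DirectSum.IsInternal 𝒞 ∧
    ∀ i : Fin T → ℕ, ∀ x ∈ 𝒞 i, Coalgebra.comul (R := k) x ∈
      ⨆ (j : Fin T → ℕ) (_ : j ≤ i), tensorSub k C (𝒞 j) (𝒞 (i - j))

/-- `π` is the family of projections associated to the decomposition `𝒞`. -/
def IsProjFamily (𝒞 : (Fin T → ℕ) → Submodule k C)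
    (π : (Fin T → ℕ) → C →ₗ[k] C) : Prop :=
  (∀ i x, π i x ∈ 𝒞 i) ∧ (∀ i, ∀ x ∈ 𝒞 i, π i x = x) ∧
    (∀ i j, i ≠ j → ∀ x ∈ 𝒞 j, π i x = 0)

/-- The grading `𝒞` (with projections `π`) is strictly coradically graded:
`𝒞(0)` is the coradical, and `Δ_{i,j} = (π_i ⊗ π_j) ∘ Δ` is injective on
`𝒞(i+j)` for all `i, j`. -/
def IsStrictlyCoradicallyGraded (𝒞 : (Fin T → ℕ) → Submodule k C)
    (π : (Fin T → ℕ) → C →ₗ[k] C) : Prop :=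
  𝒞 0 = coradical k C ∧
    ∀ i j : Fin T → ℕ, ∀ x ∈ 𝒞 (i + j),
      (TensorProduct.map (π i) (π j)) (Coalgebra.comul (R := k) x) = 0 → x = 0

end Defs


section Helpers

variable {k C : Type*} [CommRing k] [AddCommGroup C] [Module k C] [Coalgebra k C]

lemma tensorSub_mono {X X' Y Y' : Submodule k C} (hX : X ≤ X') (hY : Y ≤ Y') :
    tensorSub k C X Y ≤ tensorSub k C X' Y' := by
  rintro _ ⟨z, rfl⟩
  refine ⟨TensorProduct.map (Submodule.inclusion hX) (Submodule.inclusion hY) z, ?_⟩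
  rw [← LinearMap.comp_apply, ← TensorProduct.map_comp,
    Submodule.subtype_comp_inclusion, Submodule.subtype_comp_inclusion]

lemma tensorSub_le_ker_left {X Y : Submodule k C} (f g : C →ₗ[k] C)
    (hf : ∀ x ∈ X, f x = 0) :
    tensorSub k C X Y ≤ LinearMap.ker (TensorProduct.map f g) := by
  rintro _ ⟨z, rfl⟩
  rw [LinearMap.mem_ker, ← LinearMap.comp_apply, ← TensorProduct.map_comp]
  have h : f ∘ₗ X.subtype = 0 := by ext x; exact hf x x.2
  rw [h, TensorProduct.map_zero_left, LinearMap.zero_apply]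

lemma tensorSub_le_ker_right {X Y : Submodule k C} (f g : C →ₗ[k] C)
    (hg : ∀ x ∈ Y, g x = 0) :
    tensorSub k C X Y ≤ LinearMap.ker (TensorProduct.map f g) := by
  rintro _ ⟨z, rfl⟩
  rw [LinearMap.mem_ker, ← LinearMap.comp_apply, ← TensorProduct.map_comp]
  have h : g ∘ₗ Y.subtype = 0 := by ext x; exact hg x x.2
  rw [h, TensorProduct.map_zero_right, LinearMap.zero_apply]

end Helpers

/-- Lemma 3.2(b): a strictly coradically `ℕ^T`-graded coalgebra is coradically
graded: the `n`-th term of the coradical filtration is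
`⊕_{|i| ≤ n} 𝒞(i)`. -/
theorem stmt8 {k C : Type*} [Field k] [AddCommGroup C] [Module k C]
    [Coalgebra k C] {T : ℕ}
    (𝒞 : (Fin T → ℕ) → Submodule k C) (π : (Fin T → ℕ) → C →ₗ[k] C)
    (hgr : IsGradedCoalgebra k C 𝒞)
    (hproj : IsProjFamily k C 𝒞 π)
    (hstrict : IsStrictlyCoradicallyGraded k C 𝒞 π) :
    ∀ n : ℕ, coradFil k C n =
      ⨆ (i : Fin T → ℕ) (_ : (∑ t, i t) ≤ n), 𝒞 i := by
  obtain ⟨hdecomp, hcomul⟩ := hgr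
  obtain ⟨hmem, hid, hzero⟩ := hproj
  obtain ⟨hcorad, hinj⟩ := hstrict
  intro n
  induction n with
  | zero =>
    show coradical k C = _
    rw [← hcorad]
    apply le_antisymm
    · exact le_iSup₂_of_le 0 (by simp) le_rfl
    · refine iSup₂_le fun i hi => ?_
      have hi0 : i = 0 := by
        funext t
        exact (Finset.sum_eq_zero_iff).mp (Nat.le_zero.mp hi) t (Finset.mem_univ t)
      rw [hi0]
  | succ n ih =>
    show wedge k C (coradical k C) (coradFil k C n) = _
    apply le_antisymm
    · intro x hx
      have hx' : Coalgebra.comul (R := k) x ∈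
          tensorSub k C (coradical k C) ⊤ ⊔ tensorSub k C ⊤ (coradFil k C n) := hx
      have hxtop : x ∈ ⨆ i, 𝒞 i := by
        rw [hdecomp.submodule_iSup_eq_top]; trivial
      obtain ⟨f, hf1, hf2⟩ := (Submodule.mem_iSup_iff_exists_finsupp _ _).mp hxtop
      have hx_eq : x = ∑ i ∈ f.support, f i := by rw [← hf2]; rfl
      have key : ∀ i : Fin T → ℕ, ¬ ((∑ t, i t) ≤ n + 1) → f i = 0 := by
        intro i hi
        have hsum : ∑ t, i t ≠ 0 := by omega
        obtain ⟨t0, -, ht0⟩ := Finset.exists_ne_zero_of_sum_ne_zero hsum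
        set a : Fin T → ℕ := Pi.single t0 1 with ha_def
        set b : Fin T → ℕ := i - a with hb_def
        have hai : a ≤ i := by
          intro t
          by_cases h : t = t0
          · subst h; simpa [ha_def] using Nat.one_le_iff_ne_zero.mpr ht0
          · simp [ha_def, Pi.single_apply, h]
        have hab : a + b = i := by
          rw [hb_def, add_tsub_cancel_of_le hai]
        have hsuma : ∑ t, a t = 1 := by
          simp [ha_def, Pi.single_apply]
        have hsumb : ¬ ((∑ t, b t) ≤ n) := by
          have hadd : (∑ t, b t) + (∑ t, a t) = ∑ t, i t := by
            rw [← Finset.sum_add_distrib]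
            exact Finset.sum_congr rfl fun t _ => tsub_add_cancel_of_le (hai t)
          omega
        have ha0 : a ≠ 0 := by
          intro h
          have h2 := congrFun h t0
          simp [ha_def] at h2
        have hkerb : coradFil k C n ≤ LinearMap.ker (π b) := by
          rw [ih]
          refine iSup₂_le fun j hj y hy => ?_
          exact hzero b j (by rintro rfl; exact hsumb hj) y hy
        have hA : TensorProduct.map (π a) (π b) (Coalgebra.comul (R := k) x) = 0 := by
          obtain ⟨y, hy, z, hz, hyz⟩ := Submodule.mem_sup.mp hx'
          rw [← hyz, map_add]
          have h1 : TensorProduct.map (π a) (π b) y = 0 :=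
            tensorSub_le_ker_left _ _ (fun u hu => hzero a 0 ha0 u (hcorad ▸ hu)) hy
          have h2 : TensorProduct.map (π a) (π b) z = 0 :=
            tensorSub_le_ker_right _ _ (fun u hu => hkerb hu) hz
          rw [h1, h2, add_zero]
        have hB : ∀ i' : Fin T → ℕ, i' ≠ i → ∀ y ∈ 𝒞 i',
            TensorProduct.map (π a) (π b) (Coalgebra.comul (R := k) y) = 0 := by
          intro i' hne y hy
          have hle : (⨆ (j) (_ : j ≤ i'), tensorSub k C (𝒞 j) (𝒞 (i' - j))) ≤
              LinearMap.ker (TensorProduct.map (π a) (π b)) := by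
            refine iSup₂_le fun j hj => ?_
            by_cases hja : j = a
            · have hne2 : i' - j ≠ b := by
                intro h
                apply hne
                rw [← hab, ← h, hja, ← hja, add_tsub_cancel_of_le hj]
              exact tensorSub_le_ker_right _ _
                (fun u hu => hzero b _ (Ne.symm hne2) u hu)
            · exact tensorSub_le_ker_left _ _
                (fun u hu => hzero a j (Ne.symm hja) u hu)
          exact hle (hcomul i' y hy)
        have hsum_eq : TensorProduct.map (π a) (π b) (Coalgebra.comul (R := k) x) =
            TensorProduct.map (π a) (π b) (Coalgebra.comul (R := k) (f i)) := by
          rw [hx_eq, map_sum, map_sum]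
          refine Finset.sum_eq_single i (fun i' _ hne => hB i' hne (f i') (hf1 i')) ?_
          intro hnot
          rw [Finsupp.notMem_support_iff.mp hnot]
          simp
        exact hinj a b (f i) (hab ▸ hf1 i) (by rw [← hsum_eq, hA])
      rw [hx_eq]
      refine Submodule.sum_mem _ fun i _ => ?_
      by_cases hi : (∑ t, i t) ≤ n + 1
      · exact Submodule.mem_iSup_of_mem i (Submodule.mem_iSup_of_mem hi (hf1 i))
      · rw [key i hi]; exact Submodule.zero_mem _
    · refine iSup₂_le fun i hi x hx => ?_
      simp only [wedge, Submodule.mem_comap]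
      refine SetLike.le_def.mp ?_ (hcomul i x hx)
      refine iSup₂_le fun j hj => ?_
      by_cases hj0 : j = 0
      · subst hj0
        exact le_sup_of_le_left (tensorSub_mono (le_of_eq hcorad) le_top)
      · refine le_sup_of_le_right (tensorSub_mono le_top ?_)
        rw [ih]
        refine le_iSup₂_of_le (i - j) ?_ le_rfl
        obtain ⟨t1, -, ht1⟩ := Finset.exists_ne_zero_of_sum_ne_zero
          (show ∑ t, j t ≠ 0 by
            intro h
            exact hj0 (funext fun t =>
              (Finset.sum_eq_zero_iff).mp h t (Finset.mem_univ t)))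
        have h1 : 1 ≤ ∑ t, j t :=
          le_trans (Nat.one_le_iff_ne_zero.mpr ht1)
            (Finset.single_le_sum (fun t _ => Nat.zero_le _) (Finset.mem_univ t1))
        have hadd : (∑ t, (i - j) t) + (∑ t, j t) = ∑ t, i t := by
          rw [← Finset.sum_add_distrib]
          exact Finset.sum_congr rfl fun t _ => tsub_add_cancel_of_le (hj t)
        omega
end
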